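/- Let c > 0, b > 0, let T ∈ (0, ∞], and let θ : (−T, 0] → ℝ be differentiable with θ′(t) ≤ −θ(t)²/c for all t ∈ (−T, 0]. If θ(0) ≥ b, then T ≤ c/b. -/

import Mathlib

/-!
Along a solution of `θ' ≤ -θ²/c` the function `θ` decreases, so it stays `≥ b > 0` on every
interval `[t, 0]`, and there `1/θ` grows at rate at least `1/c`. Since `1/θ` is positive at `t` and at
most `1/b` at `0`, the interval has length `-t ≤ c/b`.
-/

open Set

theorem le_deriv_inv_of_deriv_le_neg_sq_div {θ : ℝ → ℝ} {c t : ℝ}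
    (hθ : DifferentiableAt ℝ θ t) (hθt : θ t ≠ 0) (hineq : deriv θ t ≤ -θ t ^ 2 / c) :
    c⁻¹ ≤ deriv θ⁻¹ t := by
  have hsq : 0 < θ t ^ 2 := by positivity
  rw [(hθ.hasDerivAt.inv hθt).deriv, le_div_iff₀ hsq]
  have : -θ t ^ 2 / c = -(c⁻¹ * θ t ^ 2) := by ring
  linarith

theorem antitoneOn_of_deriv_le_neg_sq_div {θ : ℝ → ℝ} {c a b : ℝ} (hc : 0 ≤ c)
    (hθ : ∀ t ∈ Icc a b, DifferentiableAt ℝ θ t)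
    (hineq : ∀ t ∈ Ioo a b, deriv θ t ≤ -θ t ^ 2 / c) :
    AntitoneOn θ (Icc a b) := by
  refine antitoneOn_of_deriv_nonpos (convex_Icc a b)
    (fun t ht ↦ (hθ t ht).continuousAt.continuousWithinAt) ?_ ?_ <;> rw [interior_Icc]
  · exact fun t ht ↦ (hθ t (Ioo_subset_Icc_self ht)).differentiableWithinAt
  · intro t ht
    exact (hineq t ht).trans (div_nonpos_of_nonpos_of_nonneg (neg_nonpos.2 (sq_nonneg _)) hc)

theorem sub_le_div_of_deriv_le_neg_sq_div {θ : ℝ → ℝ} {c β a b : ℝ} (hc : 0 < c) (hβ : 0 < β)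
    (hθ : ∀ t ∈ Icc a b, DifferentiableAt ℝ θ t)
    (hineq : ∀ t ∈ Ioo a b, deriv θ t ≤ -θ t ^ 2 / c) (hb : β ≤ θ b) :
    b - a ≤ c / β := by
  rcases lt_or_ge b a with hba | hab
  · linarith [div_pos hc hβ]
  have hanti := antitoneOn_of_deriv_le_neg_sq_div hc.le hθ hineq
  have hpos : ∀ t ∈ Icc a b, 0 < θ t := fun t ht ↦
    hβ.trans_le (hb.trans (hanti ht (right_mem_Icc.2 hab) ht.2))
  have hinv_cont : ContinuousOn θ⁻¹ (Icc a b) := fun t ht ↦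
    ((hθ t ht).continuousAt.inv₀ (hpos t ht).ne').continuousWithinAt
  have hinv_diff : DifferentiableOn ℝ θ⁻¹ (interior (Icc a b)) := by
    rw [interior_Icc]
    exact fun t ht ↦ ((hθ t (Ioo_subset_Icc_self ht)).inv
      (hpos t (Ioo_subset_Icc_self ht)).ne').differentiableWithinAt
  have hgrowth : c⁻¹ * (b - a) ≤ (θ b)⁻¹ - (θ a)⁻¹ := by
    refine (convex_Icc a b).mul_sub_le_image_sub_of_le_deriv hinv_cont hinv_diff ?_ a
      (left_mem_Icc.2 hab) b (right_mem_Icc.2 hab) hab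
    rw [interior_Icc]
    intro t ht
    have htI := Ioo_subset_Icc_self ht
    exact le_deriv_inv_of_deriv_le_neg_sq_div (hθ t htI) (hpos t htI).ne' (hineq t ht)
  have hθa : 0 < (θ a)⁻¹ := inv_pos.2 (hpos a (left_mem_Icc.2 hab))
  have hθb : (θ b)⁻¹ ≤ β⁻¹ := inv_anti₀ hβ hb
  calc b - a = c * (c⁻¹ * (b - a)) := by field_simp
    _ ≤ c * β⁻¹ := by gcongr; linarith
    _ = c / β := div_eq_mul_inv c β

theorem hawking_past_incompleteness_general
    (c b : ℝ) (hc : 0 < c) (hb : 0 < b) (T : EReal)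
    (θ : ℝ → ℝ)
    (hdiff : ∀ t : ℝ, t ≤ 0 → -T < (t : EReal) → DifferentiableAt ℝ θ t)
    (hineq : ∀ t : ℝ, t ≤ 0 → -T < (t : EReal) → deriv θ t ≤ -(θ t) ^ 2 / c)
    (h0 : b ≤ θ 0) :
    T ≤ ((c / b : ℝ) : EReal) := by
  refine EReal.ge_of_forall_gt_iff_ge.1 fun r hr ↦ ?_
  have hmem : ∀ t ∈ Icc (-r) 0, t ≤ 0 ∧ -T < (t : EReal) := fun t ht ↦
    ⟨ht.2, (EReal.neg_lt_neg_iff.2 hr).trans_le (by exact_mod_cast ht.1)⟩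
  have hlen := sub_le_div_of_deriv_le_neg_sq_div hc hb
    (fun t ht ↦ hdiff t (hmem t ht).1 (hmem t ht).2)
    (fun t ht ↦ hineq t (hmem t (Ioo_subset_Icc_self ht)).1 (hmem t (Ioo_subset_Icc_self ht)).2) h0
  rw [zero_sub, neg_neg] at hlen
  exact_mod_cast hlen

/-- Analytic core of Hawking's cosmological singularity theorem:
if `θ' ≤ -θ²/c` on `(-T, 0]` and `θ 0 ≥ b > 0`, then `T ≤ c / b`. -/
theorem hawking_past_incompleteness
    (c b : ℝ) (hc : 0 < c) (hb : 0 < b) (T : EReal) (hT : 0 < T)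
    (θ : ℝ → ℝ)
    (hdiff : ∀ t : ℝ, t ≤ 0 → -T < (t : EReal) → DifferentiableAt ℝ θ t)
    (hineq : ∀ t : ℝ, t ≤ 0 → -T < (t : EReal) → deriv θ t ≤ -(θ t) ^ 2 / c)
    (h0 : b ≤ θ 0) :
    T ≤ ((c / b : ℝ) : EReal) :=
  hawking_past_incompleteness_general c b hc hb T θ hdiff hineq h0
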